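/- arXiv:2605.16287 — 2 statements merged into one kernel-verified Lean document; each statement's English description precedes it below -/
import Mathlib

section
/- Let λ ≠ 0 and β be real numbers, let m ≥ 1 be an integer, and let x be a real number with |λx| < 1 and 1 + λx > 0. Then Σ_{n=0}^∞ n^m (β)_{n,λ} x^n/n! = Σ_{k=1}^m S(m,k) x^k (β)_{k,λ} (1 + λx)^{β/λ − k}, the series on the left being absolutely convergent. -/
/-
The series is a finite combination of binomial series. Writing `n ^ m` in the falling-factorial
basis, `n ^ m = ∑ₖ S(m,k) n(n-1)⋯(n-k+1)`, the `k`-th piece is, after the shift `n = j + k`, the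
binomial series of `x ^ k (β)_{k,λ} (1 + λx) ^ ((β - kλ)/λ)`, because
`(β)_{j+k,λ} = (β)_{k,λ} (β - kλ)_{j,λ}` and `(β)_{j,λ} x ^ j / j! = choose(β/λ, j) (λx) ^ j`.
The Stirling numbers of the definition agree with Mathlib's `Nat.stirlingSecond` since
`d/dz (e^z - 1)^(k+1) = (k+1) ((e^z - 1)^(k+1) + (e^z - 1)^k)` is their recurrence.
-/

open Finset

/-- degenerate falling factorial `(β)_{k,lam}` -/
noncomputable def dff (β lam : ℝ) (k : ℕ) : ℝ := ∏ i ∈ Finset.range k, (β - i * lam)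

/-- Stirling numbers of the second kind -/
noncomputable def S2 (n k : ℕ) : ℝ :=
  iteratedDeriv n (fun z : ℝ => (Real.exp z - 1) ^ k) 0 / k.factorial

namespace Polynomial

theorem X_pow_eq_sum_stirlingSecond_mul_descPochhammer (R : Type*) [CommRing R] (m : ℕ) :
    (X : R[X]) ^ m =
      ∑ k ∈ range (m + 1), (Nat.stirlingSecond m k : R[X]) * descPochhammer R k := by
  induction m with
  | zero => simp
  | succ m ih =>
    have hX (k : ℕ) :
        (X : R[X]) * descPochhammer R k = descPochhammer R (k + 1) + k * descPochhammer R k := by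
      rw [descPochhammer_succ_right]; ring
    have hshift :
        ∑ k ∈ range (m + 1), (Nat.stirlingSecond m k : R[X]) * (k * descPochhammer R k) =
          ∑ k ∈ range (m + 1),
            ((k + 1) * Nat.stirlingSecond m (k + 1) : ℕ) * descPochhammer R (k + 1) := by
      rw [sum_range_succ', sum_range_succ (fun k : ℕ =>
          (((k + 1) * Nat.stirlingSecond m (k + 1) : ℕ) : R[X]) * descPochhammer R (k + 1)) m,
        Nat.stirlingSecond_eq_zero_of_lt (by omega : m < m + 1)]
      simp only [Nat.cast_zero, mul_zero, zero_mul, add_zero]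
      exact sum_congr rfl fun k _ => by push_cast; ring
    calc (X : R[X]) ^ (m + 1)
        = ∑ k ∈ range (m + 1), (Nat.stirlingSecond m k : R[X]) * descPochhammer R (k + 1) +
            ∑ k ∈ range (m + 1), (Nat.stirlingSecond m k : R[X]) * (k * descPochhammer R k) := by
          rw [_root_.pow_succ', ih, mul_sum, ← sum_add_distrib]
          exact sum_congr rfl fun k _ => by rw [mul_left_comm, hX, mul_add]
      _ = ∑ k ∈ range (m + 1 + 1), (Nat.stirlingSecond (m + 1) k : R[X]) * descPochhammer R k := by
          rw [hshift, ← sum_add_distrib, sum_range_succ' _ (m + 1)]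
          simp only [Nat.stirlingSecond_succ_succ, Nat.stirlingSecond_succ_zero, Nat.cast_zero,
            zero_mul, add_zero]
          exact sum_congr rfl fun k _ => by push_cast; ring

end Polynomial

theorem Nat.cast_pow_eq_sum_stirlingSecond_mul_descFactorial (R : Type*) [CommRing R]
    {m : ℕ} (hm : m ≠ 0) (n : ℕ) :
    (n : R) ^ m = ∑ k ∈ Icc 1 m, (Nat.stirlingSecond m k : R) * n.descFactorial k := by
  have h := congrArg (Polynomial.eval (n : R))
    (Polynomial.X_pow_eq_sum_stirlingSecond_mul_descPochhammer R m)
  simp only [Polynomial.eval_pow, Polynomial.eval_X, Polynomial.eval_finsetSum,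
    Polynomial.eval_mul, Polynomial.eval_natCast, descPochhammer_eval_eq_descFactorial] at h
  obtain ⟨m, rfl⟩ := Nat.exists_eq_succ_of_ne_zero hm
  rw [h, range_eq_Ico, sum_eq_sum_Ico_succ_bot (by omega), Nat.stirlingSecond_succ_zero,
    Nat.cast_zero, zero_mul, zero_add, Ico_add_one_right_eq_Icc]

section Stirling

open Real

lemma deriv_exp_sub_one_pow_succ (k : ℕ) :
    deriv (fun z : ℝ => (exp z - 1) ^ (k + 1)) =
      fun z => (k + 1) * ((exp z - 1) ^ (k + 1) + (exp z - 1) ^ k) := by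
  funext z
  rw [(((hasDerivAt_exp z).sub_const 1).fun_pow (k + 1)).deriv]
  push_cast
  ring

lemma iteratedDeriv_succ_exp_sub_one_pow_succ (m k : ℕ) (x : ℝ) :
    iteratedDeriv (m + 1) (fun z : ℝ => (exp z - 1) ^ (k + 1)) x =
      (k + 1) * (iteratedDeriv m (fun z : ℝ => (exp z - 1) ^ (k + 1)) x +
        iteratedDeriv m (fun z : ℝ => (exp z - 1) ^ k) x) := by
  rw [iteratedDeriv_succ', deriv_exp_sub_one_pow_succ, iteratedDeriv_const_mul_field,
    iteratedDeriv_fun_add (by fun_prop) (by fun_prop)]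

lemma S2_succ_succ (m k : ℕ) :
    S2 (m + 1) (k + 1) = (k + 1) * S2 m (k + 1) + S2 m k := by
  simp only [S2, iteratedDeriv_succ_exp_sub_one_pow_succ, Nat.factorial_succ, Nat.cast_mul]
  field_simp
  push_cast
  ring

theorem S2_eq_stirlingSecond (m k : ℕ) : S2 m k = Nat.stirlingSecond m k := by
  induction m generalizing k with
  | zero => cases k <;> simp [S2]
  | succ m ih =>
    cases k with
    | zero => simp [S2, iteratedDeriv_succ']
    | succ k => rw [S2_succ_succ, ih, ih, Nat.stirlingSecond_succ_succ]; push_cast; ring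

end Stirling

lemma Ring.choose_eq_prod_div {K : Type*} [Field K] [CharZero K] (a : K) (n : ℕ) :
    Ring.choose a n = (∏ j ∈ range n, (a - j)) / n.factorial := by
  rw [Ring.choose_eq_smul, ← Polynomial.aeval_eq_smeval, Polynomial.aeval_def,
    ← Polynomial.eval_map, descPochhammer_map, descPochhammer_eval_eq_prod_range, smul_eq_mul,
    inv_mul_eq_div]

lemma dff_eq_pow_mul_prod {lam : ℝ} (β : ℝ) (hlam : lam ≠ 0) (n : ℕ) :
    dff β lam n = lam ^ n * ∏ j ∈ range n, (β / lam - j) := by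
  rw [dff, ← card_range n, ← prod_const, card_range, ← prod_mul_distrib]
  exact prod_congr rfl fun j _ => by field_simp

lemma dff_add (β lam : ℝ) (k j : ℕ) :
    dff β lam (k + j) = dff β lam k * dff (β - k * lam) lam j := by
  rw [dff, dff, dff, prod_range_add]
  congr 1
  exact prod_congr rfl fun i _ => by push_cast; ring

theorem hasSum_dff_mul_pow_div_factorial {lam x : ℝ} (β : ℝ) (hlam : lam ≠ 0)
    (hx : |lam * x| < 1) :
    HasSum (fun n : ℕ => dff β lam n * x ^ n / n.factorial) ((1 + lam * x) ^ (β / lam)) := by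
  have h := Real.one_add_rpow_hasFPowerSeriesOnBall_zero (a := β / lam) |>.hasSum
    (y := lam * x) (by rwa [mem_eball_zero_iff, ← ofReal_norm, ENNReal.ofReal_lt_one])
  simp only [binomialSeries_apply, List.ofFn_const, List.prod_replicate, zero_add] at h
  refine h.congr_fun fun n => ?_
  rw [Ring.choose_eq_prod_div, dff_eq_pow_mul_prod β hlam, smul_eq_mul]
  ring

lemma descFactorial_mul_dff_mul_pow_div_factorial (β lam x : ℝ) (k j : ℕ) :
    ((j + k).descFactorial k : ℝ) * dff β lam (j + k) * x ^ (j + k) / (j + k).factorial =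
      x ^ k * dff β lam k * (dff (β - k * lam) lam j * x ^ j / j.factorial) := by
  have hfac : ((j + k).factorial : ℝ) = j.factorial * (j + k).descFactorial k := by
    rw [← Nat.factorial_mul_descFactorial (Nat.le_add_left k j), Nat.add_sub_cancel]
    push_cast
    ring
  have hdesc : ((j + k).descFactorial k : ℝ) ≠ 0 := by
    exact_mod_cast (Nat.descFactorial_pos.mpr (Nat.le_add_left k j)).ne'
  rw [hfac, add_comm j k, dff_add, pow_add]
  field_simp

theorem hasSum_descFactorial_mul_dff_mul_pow_div_factorial {lam x : ℝ} (β : ℝ) (hlam : lam ≠ 0)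
    (hx : |lam * x| < 1) (k : ℕ) :
    HasSum (fun n : ℕ => (n.descFactorial k : ℝ) * dff β lam n * x ^ n / n.factorial)
      (x ^ k * dff β lam k * (1 + lam * x) ^ (β / lam - k)) := by
  have hshift := (hasSum_dff_mul_pow_div_factorial (β - k * lam) hlam hx).mul_left
    (x ^ k * dff β lam k)
  rw [show (β - k * lam) / lam = β / lam - k by field_simp] at hshift
  have hvanish : ∑ n ∈ range k,
      (n.descFactorial k : ℝ) * dff β lam n * x ^ n / n.factorial = 0 :=
    sum_eq_zero fun n hn => by simp [Nat.descFactorial_of_lt (mem_range.mp hn)]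
  rw [← hasSum_nat_add_iff' k, hvanish, sub_zero]
  simpa only [descFactorial_mul_dff_mul_pow_div_factorial] using hshift

theorem stmt4_general (lam β x : ℝ) (m : ℕ) (hlam : lam ≠ 0) (hm : 1 ≤ m)
    (hx : |lam * x| < 1) :
    Summable (fun n : ℕ => |(n : ℝ) ^ m * dff β lam n * x ^ n / n.factorial|) ∧
    ∑' n : ℕ, (n : ℝ) ^ m * dff β lam n * x ^ n / n.factorial
      = ∑ k ∈ Finset.Icc 1 m,
          S2 m k * x ^ k * dff β lam k * (1 + lam * x) ^ (β / lam - k) := by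
  have hterm (n : ℕ) : (n : ℝ) ^ m * dff β lam n * x ^ n / n.factorial =
      ∑ k ∈ Icc 1 m, S2 m k * ((n.descFactorial k : ℝ) * dff β lam n * x ^ n / n.factorial) := by
    rw [Nat.cast_pow_eq_sum_stirlingSecond_mul_descFactorial ℝ (by omega), sum_mul, sum_mul,
      sum_div]
    exact sum_congr rfl fun k _ => by rw [S2_eq_stirlingSecond]; ring
  have hsum : HasSum (fun n : ℕ => (n : ℝ) ^ m * dff β lam n * x ^ n / n.factorial)
      (∑ k ∈ Icc 1 m, S2 m k * (x ^ k * dff β lam k * (1 + lam * x) ^ (β / lam - k))) := by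
    rw [funext hterm]
    exact hasSum_sum fun k _ =>
      (hasSum_descFactorial_mul_dff_mul_pow_div_factorial β hlam hx k).mul_left (S2 m k)
  exact ⟨hsum.summable.abs, hsum.tsum_eq.trans (sum_congr rfl fun k _ => by ring)⟩

theorem stmt4 (lam β x : ℝ) (m : ℕ) (hlam : lam ≠ 0) (hm : 1 ≤ m)
    (hx : |lam * x| < 1) (hx' : 0 < 1 + lam * x) :
    Summable (fun n : ℕ => |(n : ℝ) ^ m * dff β lam n * x ^ n / n.factorial|) ∧
    ∑' n : ℕ, (n : ℝ) ^ m * dff β lam n * x ^ n / n.factorial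
      = ∑ k ∈ Finset.Icc 1 m,
          S2 m k * x ^ k * dff β lam k * (1 + lam * x) ^ (β / lam - k) :=
  stmt4_general lam β x m hlam hm hx
end

section
/- For every n ∈ ℕ and all real x, y, K^{(β)}_{n,λ}(x + y) = Σ_{k=0}^n C(n,k) · K^{(β)}_{k,λ}(x) · [y]_{n−k}. -/
/-!
Near `t = 0` the generating function at `x + y` is the one at `x` times
`((1 + t) / (1 + q t)) ^ y = (1 + t) ^ y (1 + q t) ^ (-y)`, so the addition formula is the Leibniz
rule, once the Taylor coefficients of that factor are identified with `[y]_n`, again by Leibniz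
applied to the two binomial powers.
-/

open Finset

/-- degenerate Krawtchouk Appell polynomials -/
noncomputable def K (lam β q r : ℝ) (n : ℕ) (x : ℝ) : ℝ :=
  iteratedDeriv n
    (fun t : ℝ => ((1 + t) / (1 + q * t)) ^ x *
      (1 + lam * r * Real.log (1 + q * t)) ^ (-β / lam)) 0

/-- classical falling factorial -/
noncomputable def ff (y : ℝ) (m : ℕ) : ℝ := ∏ i ∈ Finset.range m, (y - i)

/-- the bracket `[y]_n` -/
noncomputable def br (q y : ℝ) (n : ℕ) : ℝ :=
  ∑ k ∈ Finset.range (n + 1), (n.choose k : ℝ) * q ^ k * ff y (n - k) * ff (-y) k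

open Filter Topology

lemma ff_succ (a : ℝ) (n : ℕ) : ff a (n + 1) = ff a n * (a - n) :=
  prod_range_succ _ _

lemma iteratedDeriv_one_add_mul_rpow (c a : ℝ) (n : ℕ) {x : ℝ} (hx : 0 < 1 + c * x) :
    iteratedDeriv n (fun t => (1 + c * t) ^ a) x = c ^ n * ff a n * (1 + c * x) ^ (a - n) := by
  induction n generalizing x with
  | zero => simp [ff]
  | succ n ih =>
    have hU : IsOpen {t : ℝ | 0 < 1 + c * t} := isOpen_lt continuous_const (by fun_prop)
    have hev : iteratedDeriv n (fun t => (1 + c * t) ^ a) =ᶠ[𝓝 x]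
        fun t => c ^ n * ff a n * (1 + c * t) ^ (a - n) :=
      eventually_of_mem (hU.mem_nhds hx) fun t ht => ih ht
    have hd : HasDerivAt (fun t => (1 + c * t) ^ (a - n))
        (c * (a - n) * (1 + c * x) ^ (a - n - 1)) x := by
      simpa using (((hasDerivAt_id x).const_mul c).const_add 1).rpow_const (Or.inl hx.ne')
    rw [iteratedDeriv_succ, hev.deriv_eq, deriv_const_mul _ hd.differentiableAt, hd.deriv,
      ff_succ]
    push_cast
    ring_nf

lemma eventually_pos_one_add_mul (c : ℝ) : ∀ᶠ t in 𝓝 (0 : ℝ), 0 < 1 + c * t :=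
  (by fun_prop : Continuous fun t : ℝ => 1 + c * t).continuousAt.eventually
    (lt_mem_nhds (by simp))

lemma contDiffAt_one_add_mul_rpow (c a : ℝ) (n : ℕ) :
    ContDiffAt ℝ n (fun t => (1 + c * t) ^ a) 0 :=
  (by fun_prop : ContDiffAt ℝ n (fun t : ℝ => 1 + c * t) 0).rpow_const_of_ne (by simp)

lemma contDiffAt_ratio_rpow (q a : ℝ) (n : ℕ) :
    ContDiffAt ℝ n (fun t => ((1 + t) / (1 + q * t)) ^ a) 0 := by
  refine ContDiffAt.rpow_const_of_ne ?_ (by simp)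
  exact (by fun_prop : ContDiffAt ℝ n (fun t : ℝ => 1 + t) 0).div (by fun_prop) (by simp)

lemma iteratedDeriv_ratio_rpow_zero (q y : ℝ) (m : ℕ) :
    iteratedDeriv m (fun t => ((1 + t) / (1 + q * t)) ^ y) 0 = br q y m := by
  have hev : (fun t : ℝ => ((1 + t) / (1 + q * t)) ^ y) =ᶠ[𝓝 0]
      fun t => (1 + 1 * t) ^ y * (1 + q * t) ^ (-y) := by
    filter_upwards [eventually_pos_one_add_mul 1, eventually_pos_one_add_mul q] with t h1 h2
    rw [one_mul] at h1 ⊢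
    rw [Real.div_rpow h1.le h2.le, Real.rpow_neg h2.le, div_eq_mul_inv]
  rw [hev.iteratedDeriv_eq, iteratedDeriv_fun_mul (contDiffAt_one_add_mul_rpow 1 y m)
    (contDiffAt_one_add_mul_rpow q (-y) m), br, ← sum_range_reflect]
  refine sum_congr rfl fun k hk => ?_
  have hk : k ≤ m := Nat.lt_succ_iff.mp (mem_range.mp hk)
  rw [Nat.add_sub_cancel, Nat.sub_sub_self hk, Nat.choose_symm hk,
    iteratedDeriv_one_add_mul_rpow 1 y (m - k) (by simp),
    iteratedDeriv_one_add_mul_rpow q (-y) k (by simp)]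
  simp only [one_pow, mul_zero, add_zero, Real.one_rpow]
  ring

theorem iteratedDeriv_ratio_rpow_add_mul (q x y : ℝ) {h : ℝ → ℝ} {n : ℕ}
    (hh : ContDiffAt ℝ n h 0) :
    iteratedDeriv n (fun t => ((1 + t) / (1 + q * t)) ^ (x + y) * h t) 0
      = ∑ k ∈ range (n + 1), (n.choose k : ℝ) *
          iteratedDeriv k (fun t => ((1 + t) / (1 + q * t)) ^ x * h t) 0 * br q y (n - k) := by
  have hev : (fun t => ((1 + t) / (1 + q * t)) ^ (x + y) * h t) =ᶠ[𝓝 0]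
      fun t => ((1 + t) / (1 + q * t)) ^ x * h t * ((1 + t) / (1 + q * t)) ^ y := by
    filter_upwards [eventually_pos_one_add_mul 1, eventually_pos_one_add_mul q] with t h1 h2
    rw [one_mul] at h1
    rw [Real.rpow_add (div_pos h1 h2)]
    ring
  rw [hev.iteratedDeriv_eq,
    iteratedDeriv_fun_mul ((contDiffAt_ratio_rpow q x n).mul hh) (contDiffAt_ratio_rpow q y n)]
  simp only [iteratedDeriv_ratio_rpow_zero]

theorem stmt9_general (lam β q r : ℝ) (n : ℕ) (x y : ℝ) :
    K lam β q r n (x + y)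
      = ∑ k ∈ Finset.range (n + 1),
          (n.choose k : ℝ) * K lam β q r k x * br q y (n - k) := by
  have hlog : ContDiffAt ℝ n (fun t => (1 + lam * r * Real.log (1 + q * t)) ^ (-β / lam)) 0 := by
    refine ContDiffAt.rpow_const_of_ne ?_ (by simp)
    exact contDiffAt_const.add (contDiffAt_const.mul ((by fun_prop : ContDiffAt ℝ n
      (fun t : ℝ => 1 + q * t) 0).log (by simp)))
  exact iteratedDeriv_ratio_rpow_add_mul q x y hlog

theorem stmt9 (lam β p q r : ℝ) (hlam : lam < 0) (hβ : 0 < β)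
    (hp : 0 < p) (hp1 : p < 1) (hq : q = 1 - p) (hr : 0 < r) (n : ℕ) (x y : ℝ) :
    K lam β q r n (x + y)
      = ∑ k ∈ Finset.range (n + 1),
          (n.choose k : ℝ) * K lam β q r k x * br q y (n - k) :=
  stmt9_general lam β q r n x y
end
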